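/- arXiv:2004.01865 — 2 statements merged into one kernel-verified Lean document; each statement's English description precedes it below -/
import Mathlib

section
/- Let K : ℝ → ℝ be integrable with ∫ K(u) du = 1, and define L(t) = (∫_t^∞ K(u) du) · 1_{t>0} − (∫_{−∞}^t K(u) du) · 1_{t≤0}. Then ∫ L(t)² dt = ∬_{xy ≥ 0} K(x) K(y) (|x| ∧ |y|) dx dy, provided both sides are finite. -/
/-!
Writing `L t = ± ∫ K` over `tailSet t` (the half-line beyond `t`, pointing away from `0`), one has
`L(t)² = ∬ K(x) K(y) 1[x, y ∈ tailSet t] dx dy`. By Fubini the `t`-integral can be taken first, and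
the set of `t` with `x, y ∈ tailSet t` is `(0, x ∧ y) ∪ [x ∨ y, 0]`, of length `|x| ∧ |y|` if
`xy ≥ 0` and empty otherwise. The integrability of the right-hand side is exactly what Fubini needs.
-/

open MeasureTheory Set

section ProductIntegrals

variable {α γ : Type*} [MeasurableSpace α] [MeasurableSpace γ] {μ : Measure α} {ν : Measure γ}
  [SFinite μ]

theorem integral_sq_integral_eq_integral_integral_mul [SFinite ν] {g : α → γ → ℝ}
    (hg : Integrable (fun q : (γ × γ) × α => g q.2 q.1.1 * g q.2 q.1.2) ((ν.prod ν).prod μ)) :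
    ∫ t, (∫ x, g t x ∂ν) ^ 2 ∂μ = ∫ p, ∫ t, g t p.1 * g t p.2 ∂μ ∂(ν.prod ν) := by
  simp_rw [sq, ← integral_prod_mul]
  exact (integral_integral_swap hg).symm

theorem integrable_prod_indicator_const {c : γ → ℝ} {S : γ → Set α}
    (hS : MeasurableSet {q : γ × α | q.2 ∈ S q.1}) (hc : AEStronglyMeasurable c ν)
    (hS_fin : ∀ p, μ (S p) ≠ ⊤) (hint : Integrable (fun p => c p * μ.real (S p)) ν) :
    Integrable (fun q : γ × α => (S q.1).indicator (fun _ => c q.1) q.2) (ν.prod μ) := by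
  have hSp : ∀ p, MeasurableSet (S p) := fun p => hS.preimage measurable_prodMk_left
  have hmeas : AEStronglyMeasurable (fun q : γ × α => (S q.1).indicator (fun _ => c q.1) q.2)
      (ν.prod μ) :=
    hc.comp_fst.indicator hS
  refine (integrable_prod_iff hmeas).2 ⟨.of_forall fun p => ?_, ?_⟩
  · exact (integrable_indicator_iff (hSp p)).2 (integrableOn_const (C := c p) (hS_fin p))
  · refine hint.norm.congr (.of_forall fun p => ?_)
    simp_rw [norm_indicator_eq_indicator_norm]
    rw [integral_indicator_const _ (hSp p), norm_mul, Real.norm_of_nonneg measureReal_nonneg,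
      smul_eq_mul, mul_comm]

end ProductIntegrals

def tailSet (t : ℝ) : Set ℝ := if 0 < t then Ioi t else Iic t

theorem measurableSet_mem_tailSet : MeasurableSet {q : ℝ × ℝ | q.2 ∈ tailSet q.1} := by
  have : {q : ℝ × ℝ | q.2 ∈ tailSet q.1}
      = {q | 0 < q.1 ∧ q.1 < q.2} ∪ {q | q.1 ≤ 0 ∧ q.2 ≤ q.1} := by
    ext ⟨t, x⟩
    by_cases ht : 0 < t <;> simp [tailSet, ht, not_lt.1]
  rw [this]
  exact (measurableSet_lt measurable_const measurable_fst |>.inter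
    (measurableSet_lt measurable_fst measurable_snd)).union
    ((measurableSet_le measurable_fst measurable_const).inter
    (measurableSet_le measurable_snd measurable_fst))

def commonTailTimes (x y : ℝ) : Set ℝ := {t | x ∈ tailSet t ∧ y ∈ tailSet t}

theorem commonTailTimes_eq (x y : ℝ) :
    commonTailTimes x y = Ioo 0 (min x y) ∪ Icc (max x y) 0 := by
  ext t
  by_cases ht : 0 < t
  · simp [commonTailTimes, tailSet, ht]
  · simp [commonTailTimes, tailSet, ht, not_lt.1 ht]

theorem measurableSet_commonTailTimes (x y : ℝ) : MeasurableSet (commonTailTimes x y) := by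
  rw [commonTailTimes_eq]
  exact measurableSet_Ioo.union measurableSet_Icc

theorem volume_commonTailTimes_ne_top (x y : ℝ) : volume (commonTailTimes x y) ≠ ⊤ := by
  rw [commonTailTimes_eq]
  exact (measure_union_lt_top measure_Ioo_lt_top measure_Icc_lt_top).ne

theorem volume_real_commonTailTimes (x y : ℝ) :
    volume.real (commonTailTimes x y) = if 0 ≤ x * y then min |x| |y| else 0 := by
  have hdisj : Disjoint (Ioo 0 (min x y)) (Icc (max x y) 0) :=
    Set.disjoint_left.2 fun t h1 h2 => h1.1.not_ge h2.2
  rw [commonTailTimes_eq, measureReal_union hdisj measurableSet_Icc measure_Ioo_lt_top.ne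
      measure_Icc_lt_top.ne, Real.volume_real_Ioo, Real.volume_real_Icc, sub_zero, zero_sub]
  simp only [min_def, max_def, abs]
  split_ifs <;> first | linarith | nlinarith

theorem indicator_tailSet_mul_indicator_tailSet (K : ℝ → ℝ) (t x y : ℝ) :
    (tailSet t).indicator K x * (tailSet t).indicator K y
      = (commonTailTimes x y).indicator (fun _ => K x * K y) t := by
  classical
  simp only [indicator_apply, commonTailTimes, mem_ofPred_eq]
  split_ifs <;> simp_all

theorem measurableSet_mem_commonTailTimes :
    MeasurableSet {q : (ℝ × ℝ) × ℝ | q.2 ∈ commonTailTimes q.1.1 q.1.2} :=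
  (measurableSet_mem_tailSet.preimage (measurable_snd.prodMk measurable_fst.fst)).inter
    (measurableSet_mem_tailSet.preimage (measurable_snd.prodMk measurable_fst.snd))

theorem stmt_0_general (K : ℝ → ℝ) (hK : Integrable K)
    (L : ℝ → ℝ)
    (hL : ∀ t, L t = if 0 < t then ∫ u in Ioi t, K u else -∫ u in Iic t, K u)
    (hKKint : Integrable (fun p : ℝ × ℝ =>
      if 0 ≤ p.1 * p.2 then K p.1 * K p.2 * min |p.1| |p.2| else 0)) :
    ∫ t, (L t) ^ 2
      = ∫ p : ℝ × ℝ, (if 0 ≤ p.1 * p.2 then K p.1 * K p.2 * min |p.1| |p.2| else 0) := by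
  have hL_sq (t : ℝ) : L t ^ 2 = (∫ x, (tailSet t).indicator K x) ^ 2 := by
    by_cases ht : 0 < t <;>
      simp [hL t, tailSet, ht, integral_indicator measurableSet_Ioi,
        integral_indicator measurableSet_Iic]
  have hkernel : (fun p : ℝ × ℝ => if 0 ≤ p.1 * p.2 then K p.1 * K p.2 * min |p.1| |p.2| else 0)
      = fun p => K p.1 * K p.2 * volume.real (commonTailTimes p.1 p.2) := by
    ext p
    rw [volume_real_commonTailTimes]
    split_ifs <;> simp
  rw [hkernel] at hKKint ⊢
  simp_rw [hL_sq]
  rw [integral_sq_integral_eq_integral_integral_mul]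
  · rw [← Measure.volume_eq_prod]
    congr 1 with p
    simp_rw [indicator_tailSet_mul_indicator_tailSet]
    rw [integral_indicator_const _ (measurableSet_commonTailTimes p.1 p.2),
      smul_eq_mul, mul_comm]
  · simp_rw [indicator_tailSet_mul_indicator_tailSet]
    exact integrable_prod_indicator_const (c := fun p : ℝ × ℝ => K p.1 * K p.2)
      (S := fun p => commonTailTimes p.1 p.2) measurableSet_mem_commonTailTimes
      (hK.1.comp_fst.mul hK.1.comp_snd) (fun p => volume_commonTailTimes_ne_top p.1 p.2) hKKint

/-- For an integrable kernel `K` with `∫ K = 1`, letting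
`L t = (∫_t^∞ K) 1_{t>0} − (∫_{−∞}^t K) 1_{t≤0}`, one has
`∫ L(t)² dt = ∬_{xy ≥ 0} K(x) K(y) (|x| ⊓ |y|) dx dy`, provided both sides are finite. -/
theorem stmt_0 (K : ℝ → ℝ) (hK : Integrable K) (hK1 : ∫ u, K u = 1)
    (L : ℝ → ℝ)
    (hL : ∀ t, L t = if 0 < t then ∫ u in Ioi t, K u else -∫ u in Iic t, K u)
    (hLint : Integrable (fun t => (L t) ^ 2))
    (hKKint : Integrable (fun p : ℝ × ℝ =>
      if 0 ≤ p.1 * p.2 then K p.1 * K p.2 * min |p.1| |p.2| else 0)) :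
    ∫ t, (L t) ^ 2
      = ∫ p : ℝ × ℝ, (if 0 ≤ p.1 * p.2 then K p.1 * K p.2 * min |p.1| |p.2| else 0) :=
  stmt_0_general K hK L hL hKKint
end

section
/- Let g : [0,1] → ℝ be continuous, piecewise C¹ with piecewise Lipschitz derivative and g(0) = g(1) = 0. Then φ'_k(g) := Σ_{i=1}^k (g(i/k) − g((i−1)/k))² = (1/k) ∫_0^1 g'(s)² ds + O(1/k²) as k → ∞. -/
/-!
Write `h = 1/k`. On a cell `[u, v]` of length `h`, for every constant `c`,
`(∫ g')² - h ∫ g'² = (∫ (g' - c))² - h ∫ (g' - c)²`, and both terms lie in `[0, h² B²]` when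
`|g' - c| ≤ B` on the cell. If the cell contains no breakpoint, `g'` is `L`-Lipschitz on it and
`c = g'(midpoint)` gives `B = L h`: an error `O(h⁴)` per cell, `O(h³)` in total. The cells
containing a breakpoint, at most one per breakpoint, contribute `O(h²)` each, with `c = 0` and
`B = sup |g'|`.
By the fundamental theorem of calculus, `g(v) - g(u) = ∫ g'` on every cell.
-/

open Set

/-- `g` is piecewise `C¹` on `[0,1]` with derivative `g'` (off a finite partition) which is
Lipschitz on each piece: there is a finite partition `0 = p 0 < p 1 < ⋯ < p N = 1` such
that on each open piece `g` has derivative `g'` and `g'` is Lipschitz there. -/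
def PiecewiseC1LipDerivWith (g g' : ℝ → ℝ) : Prop :=
  ∃ (N : ℕ) (p : ℕ → ℝ), 0 < N ∧ p 0 = 0 ∧ p N = 1 ∧
    (∀ i < N, p i < p (i + 1)) ∧
    ∀ i < N,
      (∀ x ∈ Ioo (p i) (p (i + 1)), HasDerivAt g (g' x) x) ∧
      ∃ C : NNReal, LipschitzOnWith C g' (Ioo (p i) (p (i + 1)))

open MeasureTheory
open scoped NNReal Finset

theorem exists_mem_Ico_of_mem_Ico {α : Type*} [LinearOrder α] {p : ℕ → α} {N : ℕ} {x : α}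
    (hx : x ∈ Ico (p 0) (p N)) : ∃ j < N, x ∈ Ico (p j) (p (j + 1)) := by
  induction N with
  | zero => exact absurd hx.2 (not_lt.2 hx.1)
  | succ N ih =>
    by_cases h : x < p N
    · obtain ⟨j, hj, hxj⟩ := ih ⟨hx.1, h⟩
      exact ⟨j, by omega, hxj⟩
    · exact ⟨N, N.lt_succ_self, not_lt.1 h, hx.2⟩

theorem exists_mem_Ioo_of_mem_Icc {α : Type*} [LinearOrder α] {p : ℕ → α} {N : ℕ} {x : α}
    (hx : x ∈ Icc (p 0) (p N)) (hxp : ∀ j ≤ N, p j ≠ x) :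
    ∃ j < N, x ∈ Ioo (p j) (p (j + 1)) := by
  obtain ⟨j, hj, hpj, hxj⟩ :=
    exists_mem_Ico_of_mem_Ico ⟨hx.1, hx.2.lt_of_ne (hxp N le_rfl).symm⟩
  exact ⟨j, hj, hpj.lt_of_ne (hxp j hj.le), hxj⟩

theorem exists_forall_lt_of_forall_lt_exists {α : Type*} [Preorder α] [Nonempty α]
    [IsDirected α (· ≤ ·)] {P : ℕ → α → Prop} {N : ℕ} (hP : ∀ i, Monotone (P i))
    (h : ∀ i < N, ∃ a, P i a) : ∃ a, ∀ i < N, P i a :=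
  ((Filter.eventually_all_finite (finite_Iio N)).2 fun i hi ↦
    let ⟨a, ha⟩ := h i hi
    Filter.eventually_atTop.2 ⟨a, fun _ hab ↦ hP i hab ha⟩).exists

theorem LipschitzOnWith.exists_abs_le {f : ℝ → ℝ} {K : ℝ≥0} {s : Set ℝ}
    (hf : LipschitzOnWith K f s) (hs : Bornology.IsBounded s) : ∃ M, ∀ x ∈ s, |f x| ≤ M := by
  obtain ⟨G, hG, hfG⟩ := hf.extend_real
  obtain ⟨M, hM⟩ := (hG.isBounded_image hs).exists_norm_le
  exact ⟨M, fun x hx ↦ hfG hx ▸ hM _ (mem_image_of_mem G hx)⟩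

theorem LipschitzOnWith.intervalIntegrable_comp {f φ : ℝ → ℝ} {K : ℝ≥0} {a b : ℝ} (hab : a ≤ b)
    (hf : LipschitzOnWith K f (Ioo a b)) (hφ : Continuous φ) :
    IntervalIntegrable (fun x ↦ φ (f x)) volume a b := by
  obtain ⟨G, hG, hfG⟩ := hf.extend_real
  rw [intervalIntegrable_iff_integrableOn_Ioo_of_le hab]
  refine (((hφ.comp hG.continuous).integrableOn_Icc).mono_set Ioo_subset_Icc_self).congr_fun
    (fun x hx ↦ ?_) measurableSet_Ioo
  simp [hfG hx]

namespace PiecewiseC1LipDerivWith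

variable {g g' : ℝ → ℝ}

theorem intervalIntegrable_comp (h : PiecewiseC1LipDerivWith g g') {φ : ℝ → ℝ}
    (hφ : Continuous φ) : IntervalIntegrable (fun x ↦ φ (g' x)) volume 0 1 := by
  obtain ⟨N, p, -, hp0, hpN, hlt, hpiece⟩ := h
  rw [← hp0, ← hpN]
  refine IntervalIntegrable.trans_iterate fun i hi ↦ ?_
  obtain ⟨K, hK⟩ := (hpiece i hi).2
  exact hK.intervalIntegrable_comp (hlt i hi).le hφ

theorem integral_eq_sub (h : PiecewiseC1LipDerivWith g g') (hgc : ContinuousOn g (Icc 0 1))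
    {u v : ℝ} (hu : 0 ≤ u) (huv : u ≤ v) (hv : v ≤ 1) : ∫ x in u..v, g' x = g v - g u := by
  have hint : IntervalIntegrable g' volume u v := by
    refine (h.intervalIntegrable_comp continuous_id).mono_set ?_
    rw [uIcc_of_le huv, uIcc_of_le zero_le_one]
    exact Icc_subset_Icc hu hv
  obtain ⟨N, p, -, hp0, hpN, -, hpiece⟩ := h
  refine integral_eq_of_hasDerivAt_off_countable_of_le g g' huv
    ((finite_Iic N).image p).countable (hgc.mono (Icc_subset_Icc hu hv)) (fun x hx ↦ ?_) hint
  obtain ⟨j, hj, hxj⟩ := exists_mem_Ioo_of_mem_Icc (p := p) (N := N)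
    (by rw [hp0, hpN]; exact ⟨hu.trans hx.1.1.le, hx.1.2.le.trans hv⟩)
    fun j hj hjx ↦ hx.2 ⟨j, hj, hjx⟩
  exact (hpiece j hj).1 x hxj

theorem exists_finset_bound_lipschitzOnWith (h : PiecewiseC1LipDerivWith g g') :
    ∃ (S : Finset ℝ) (L : ℝ≥0) (M : ℝ), (∀ x ∈ Icc 0 1, x ∉ S → |g' x| ≤ M) ∧
      ∀ u v, 0 ≤ u → v ≤ 1 → (∀ x ∈ S, x ∉ Ioo u v) → LipschitzOnWith L g' (Ioo u v) := by
  obtain ⟨N, p, -, hp0, hpN, -, hpiece⟩ := h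
  obtain ⟨L, hL⟩ : ∃ L : ℝ≥0, ∀ i < N, LipschitzOnWith L g' (Ioo (p i) (p (i + 1))) :=
    exists_forall_lt_of_forall_lt_exists (fun _ _ _ hKL hK ↦ hK.weaken hKL)
      fun i hi ↦ (hpiece i hi).2
  obtain ⟨M, hM⟩ : ∃ M : ℝ, ∀ i < N, ∀ x ∈ Ioo (p i) (p (i + 1)), |g' x| ≤ M :=
    exists_forall_lt_of_forall_lt_exists (fun _ _ _ hMM' hM x hx ↦ (hM x hx).trans hMM')
      fun i hi ↦ (hL i hi).exists_abs_le (Metric.isBounded_Ioo _ _)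
  have hpS : ∀ j ≤ N, p j ∈ (Finset.range (N + 1)).image p := fun j hj ↦
    Finset.mem_image_of_mem p (Finset.mem_range.2 (by omega))
  refine ⟨(Finset.range (N + 1)).image p, L, M, fun x hx hxS ↦ ?_, fun u v hu hv hS ↦ ?_⟩
  · obtain ⟨j, hj, hxj⟩ := exists_mem_Ioo_of_mem_Icc (p := p) (hp0 ▸ hpN ▸ hx)
      fun j hj hjx ↦ hxS (by rw [← hjx]; exact hpS j hj)
    exact hM j hj x hxj
  · rcases le_or_gt v u with hvu | huv
    · simp [Ioo_eq_empty_of_le hvu]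
    obtain ⟨j, hj, hpj, huj⟩ :=
      exists_mem_Ico_of_mem_Ico (p := p) (N := N) ⟨hp0 ▸ hu, hpN ▸ huv.trans_le hv⟩
    have hvj : v ≤ p (j + 1) := not_lt.1 fun hvj ↦ hS _ (hpS (j + 1) hj) ⟨huj, hvj⟩
    exact (hL j hj).mono (Ioo_subset_Ioo hpj hvj)

end PiecewiseC1LipDerivWith

theorem card_filter_exists_mem_Ioo_le (S : Finset ℝ) (s : Finset ℕ) {k : ℝ} (hk : 0 < k) :
    #{i ∈ s | ∃ x ∈ S, x ∈ Ioo ((i : ℕ) / k) ((i + 1) / k)} ≤ #S := by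
  refine (Finset.card_le_card fun i hi ↦ ?_).trans (Finset.card_image_le (f := fun x ↦ ⌊k * x⌋₊))
  obtain ⟨-, x, hxS, hx⟩ := Finset.mem_filter.1 hi
  rw [mem_Ioo, div_lt_iff₀' hk, lt_div_iff₀' hk] at hx
  have hx0 : 0 ≤ k * x := (Nat.cast_nonneg i).trans hx.1.le
  exact Finset.mem_image.2 ⟨x, hxS, (Nat.floor_eq_iff hx0).2 ⟨hx.1.le, hx.2⟩⟩

theorem integral_sub_const_sq {f : ℝ → ℝ} {u v : ℝ} (c : ℝ) (hf : IntervalIntegrable f volume u v)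
    (hf2 : IntervalIntegrable (fun x ↦ f x ^ 2) volume u v) :
    ∫ x in u..v, (f x - c) ^ 2 =
      (∫ x in u..v, f x ^ 2) - 2 * c * (∫ x in u..v, f x) + c ^ 2 * (v - u) := by
  have e : (fun x ↦ (f x - c) ^ 2) = fun x ↦ f x ^ 2 - 2 * c * f x + c ^ 2 := by ext x; ring
  rw [e, intervalIntegral.integral_add (hf2.sub (hf.const_mul _)) intervalIntegrable_const,
    intervalIntegral.integral_sub hf2 (hf.const_mul _), intervalIntegral.integral_const_mul,
    intervalIntegral.integral_const, smul_eq_mul]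
  ring

theorem abs_sq_integral_sub_mul_integral_sq_le {f : ℝ → ℝ} {u v c B : ℝ} (huv : u ≤ v)
    (hf : IntervalIntegrable f volume u v) (hf2 : IntervalIntegrable (fun x ↦ f x ^ 2) volume u v)
    (hB : ∀ᵐ x, x ∈ Ioc u v → |f x - c| ≤ B) :
    |(∫ x in u..v, f x) ^ 2 - (v - u) * ∫ x in u..v, f x ^ 2| ≤ (v - u) ^ 2 * B ^ 2 := by
  have hB' : ∀ᵐ x, x ∈ uIoc u v → ‖f x - c‖ ≤ B := by simpa [uIoc_of_le huv] using hB
  have hB2 : ∀ᵐ x, x ∈ uIoc u v → ‖(f x - c) ^ 2‖ ≤ B ^ 2 := by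
    filter_upwards [hB'] with x hx hxI
    simpa using pow_le_pow_left₀ (norm_nonneg _) (hx hxI) 2
  have hmean : |∫ x in u..v, (f x - c)| ≤ B * (v - u) := by
    simpa [abs_of_nonneg (sub_nonneg.2 huv)] using
      intervalIntegral.norm_integral_le_of_norm_le_const_ae hB'
  have hvar : ∫ x in u..v, (f x - c) ^ 2 ≤ B ^ 2 * (v - u) := by
    have := intervalIntegral.norm_integral_le_of_norm_le_const_ae hB2
    rw [Real.norm_eq_abs, abs_of_nonneg (sub_nonneg.2 huv)] at this
    exact (le_abs_self _).trans this
  have hvar0 : 0 ≤ ∫ x in u..v, (f x - c) ^ 2 :=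
    intervalIntegral.integral_nonneg huv fun x _ ↦ sq_nonneg _
  have key : (∫ x in u..v, f x) ^ 2 - (v - u) * ∫ x in u..v, f x ^ 2 =
      (∫ x in u..v, (f x - c)) ^ 2 - (v - u) * ∫ x in u..v, (f x - c) ^ 2 := by
    rw [integral_sub_const_sq c hf hf2, intervalIntegral.integral_sub hf intervalIntegrable_const,
      intervalIntegral.integral_const, smul_eq_mul]
    ring
  rw [key]
  refine abs_sub_le_of_nonneg_of_le (sq_nonneg _) ?_ (mul_nonneg (sub_nonneg.2 huv) hvar0) ?_
  · calc _ = |∫ x in u..v, (f x - c)| ^ 2 := (sq_abs _).symm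
      _ ≤ (B * (v - u)) ^ 2 := pow_le_pow_left₀ (abs_nonneg _) hmean 2
      _ = _ := by ring
  · calc _ ≤ (v - u) * (B ^ 2 * (v - u)) := mul_le_mul_of_nonneg_left hvar (sub_nonneg.2 huv)
      _ = _ := by ring

section PiecewiseLipschitz

variable {f : ℝ → ℝ} {S : Finset ℝ} {L : ℝ≥0} {M : ℝ}

theorem abs_sq_integral_sub_mul_integral_sq_le_of_lipschitzOnWith
    (hf : IntervalIntegrable f volume 0 1) (hf2 : IntervalIntegrable (fun x ↦ f x ^ 2) volume 0 1)
    (hM : ∀ x ∈ Icc 0 1, x ∉ S → |f x| ≤ M)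
    (hL : ∀ u v, 0 ≤ u → v ≤ 1 → (∀ x ∈ S, x ∉ Ioo u v) → LipschitzOnWith L f (Ioo u v))
    {u v : ℝ} (hu : 0 ≤ u) (huv : u ≤ v) (hv : v ≤ 1) :
    |(∫ x in u..v, f x) ^ 2 - (v - u) * ∫ x in u..v, f x ^ 2| ≤
      (v - u) ^ 2 * if ∃ x ∈ S, x ∈ Ioo u v then M ^ 2 else (L * (v - u)) ^ 2 := by
  have hsub : uIcc u v ⊆ uIcc 0 1 := by
    rw [uIcc_of_le huv, uIcc_of_le zero_le_one]
    exact Icc_subset_Icc hu hv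
  have hnull : ∀ᵐ x, x ∉ ((insert v S : Finset ℝ) : Set ℝ) :=
    measure_eq_zero_iff_ae_notMem.1 (Finset.measure_zero _ _)
  split_ifs with hS
  · refine abs_sq_integral_sub_mul_integral_sq_le (c := 0) huv (hf.mono_set hsub)
      (hf2.mono_set hsub) ?_
    filter_upwards [hnull] with x hx hxI
    simp only [Finset.coe_insert, mem_insert_iff, Finset.mem_coe, not_or] at hx
    simpa using hM x ⟨hu.trans hxI.1.le, hxI.2.trans hv⟩ hx.2
  · push Not at hS
    refine abs_sq_integral_sub_mul_integral_sq_le (c := f ((u + v) / 2)) huv (hf.mono_set hsub)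
      (hf2.mono_set hsub) ?_
    filter_upwards [hnull] with x hx hxI
    simp only [Finset.coe_insert, mem_insert_iff, Finset.mem_coe, not_or] at hx
    have hxI' : x ∈ Ioo u v := ⟨hxI.1, hxI.2.lt_of_ne hx.1⟩
    have hm : (u + v) / 2 ∈ Ioo u v := ⟨by linarith [hxI'.1, hxI'.2], by linarith [hxI'.1, hxI'.2]⟩
    calc |f x - f ((u + v) / 2)| ≤ L * |x - (u + v) / 2| := by
          simpa [Real.dist_eq] using (hL u v hu hv hS).dist_le_mul x hxI' _ hm
      _ ≤ L * (v - u) := by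
          gcongr
          rw [abs_le]
          constructor <;> linarith [hxI'.1, hxI'.2, hm.1, hm.2]

theorem abs_sum_sq_integral_sub_le
    (hf : IntervalIntegrable f volume 0 1) (hf2 : IntervalIntegrable (fun x ↦ f x ^ 2) volume 0 1)
    (hM : ∀ x ∈ Icc 0 1, x ∉ S → |f x| ≤ M)
    (hL : ∀ u v, 0 ≤ u → v ≤ 1 → (∀ x ∈ S, x ∉ Ioo u v) → LipschitzOnWith L f (Ioo u v))
    {k : ℕ} (hk : 0 < k) :
    |∑ i ∈ Finset.range k, (∫ x in (i : ℝ) / k..(i + 1) / k, f x) ^ 2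
        - 1 / k * ∫ x in (0 : ℝ)..1, f x ^ 2| ≤ (L ^ 2 + #S * M ^ 2) / k ^ 2 := by
  have hk0 : (0 : ℝ) < k := Nat.cast_pos.2 hk
  have hcell : ∀ i ∈ Finset.range k, 0 ≤ (i : ℝ) / k ∧ (i : ℝ) / k ≤ (i + 1) / k ∧
      ((i : ℝ) + 1) / k ≤ 1 ∧ ((i : ℝ) + 1) / k - i / k = 1 / k := by
    intro i hi
    have hik : (i : ℝ) + 1 ≤ k := by exact_mod_cast Finset.mem_range.1 hi
    refine ⟨by positivity, by gcongr; linarith, (div_le_one hk0).2 hik, by ring⟩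
  have hsplit : ∫ x in (0 : ℝ)..1, f x ^ 2 =
      ∑ i ∈ Finset.range k, ∫ x in (i : ℝ) / k..(i + 1) / k, f x ^ 2 := by
    have := intervalIntegral.sum_integral_adjacent_intervals (f := fun x ↦ f x ^ 2)
      (μ := volume) (a := fun i : ℕ ↦ (i : ℝ) / k) (n := k) fun i hi ↦ by
        obtain ⟨h0, hle, h1, -⟩ := hcell i (Finset.mem_range.2 hi)
        refine hf2.mono_set ?_
        rw [uIcc_of_le (by push_cast; exact hle), uIcc_of_le zero_le_one]
        exact Icc_subset_Icc h0 (by push_cast; exact h1)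
    simp only [Nat.cast_add, Nat.cast_one, CharP.cast_eq_zero, zero_div, div_self hk0.ne'] at this
    exact this.symm
  have hbound : ∀ i ∈ Finset.range k,
      |(∫ x in (i : ℝ) / k..(i + 1) / k, f x) ^ 2
          - 1 / k * ∫ x in (i : ℝ) / k..(i + 1) / k, f x ^ 2|
        ≤ if ∃ x ∈ S, x ∈ Ioo ((i : ℝ) / k) ((i + 1) / k) then M ^ 2 / k ^ 2
          else L ^ 2 / k ^ 4 := by
    intro i hi
    obtain ⟨h0, hle, h1, hlen⟩ := hcell i hi
    have := abs_sq_integral_sub_mul_integral_sq_le_of_lipschitzOnWith hf hf2 hM hL h0 hle h1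
    rw [hlen] at this
    refine this.trans_eq ?_
    split_ifs <;> field_simp
  rw [hsplit, Finset.mul_sum, ← Finset.sum_sub_distrib]
  refine (Finset.abs_sum_le_sum_abs _ _).trans ((Finset.sum_le_sum hbound).trans ?_)
  rw [Finset.sum_ite, Finset.sum_const, Finset.sum_const, nsmul_eq_mul, nsmul_eq_mul]
  have hk1 : (1 : ℝ) ≤ k := by exact_mod_cast hk
  have hk34 : (k : ℝ) ^ 3 ≤ k ^ 4 := pow_le_pow_right₀ hk1 (by norm_num)
  calc _ ≤ #S * (M ^ 2 / k ^ 2) + k * (L ^ 2 / k ^ 4) := by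
        gcongr
        · exact_mod_cast card_filter_exists_mem_Ioo_le S _ hk0
        · exact_mod_cast (Finset.card_filter_le _ _).trans (Finset.card_range k).le
    _ ≤ (L ^ 2 + #S * M ^ 2) / k ^ 2 := by
      rw [add_div, add_comm, mul_div_assoc]
      gcongr
      rw [mul_div_assoc', div_le_div_iff₀ (by positivity) (by positivity)]
      nlinarith [mul_le_mul_of_nonneg_left hk34 (sq_nonneg (L : ℝ))]

end PiecewiseLipschitz

theorem stmt_7_general (g g' : ℝ → ℝ) (hgc : ContinuousOn g (Icc 0 1))
    (hgp : PiecewiseC1LipDerivWith g g') :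
    ∃ C : ℝ, ∀ k : ℕ, 1 ≤ k →
      |(∑ i ∈ Finset.Icc 1 k,
          (g ((i : ℝ) / (k : ℝ)) - g (((i : ℝ) - 1) / (k : ℝ))) ^ 2)
        - (1 / (k : ℝ)) * ∫ s in (0 : ℝ)..1, (g' s) ^ 2| ≤ C / (k : ℝ) ^ 2 := by
  obtain ⟨S, L, M, hM, hL⟩ := hgp.exists_finset_bound_lipschitzOnWith
  refine ⟨L ^ 2 + #S * M ^ 2, fun k hk ↦ ?_⟩
  have hk0 : (0 : ℝ) < k := by exact_mod_cast hk
  have hincr : ∀ i ∈ Finset.range k,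
      (g (((1 + i : ℕ) : ℝ) / k) - g ((((1 + i : ℕ) : ℝ) - 1) / k)) ^ 2
        = (∫ x in (i : ℝ) / k..(i + 1) / k, g' x) ^ 2 := by
    intro i hi
    have hik : (i : ℝ) + 1 ≤ k := by exact_mod_cast Finset.mem_range.1 hi
    push_cast
    rw [add_sub_cancel_left, add_comm (1 : ℝ), hgp.integral_eq_sub hgc (by positivity)
      (by gcongr; linarith) ((div_le_one hk0).2 hik)]
  rw [← Finset.Ico_add_one_right_eq_Icc, Finset.sum_Ico_eq_sum_range, Nat.add_sub_cancel,
    Finset.sum_congr rfl hincr]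
  exact abs_sum_sq_integral_sub_le (hgp.intervalIntegrable_comp continuous_id)
    (hgp.intervalIntegrable_comp (continuous_pow 2)) hM hL hk

/-- For a continuous, piecewise `C¹` weight function `g` on `[0,1]` with
piecewise Lipschitz derivative `g'` and `g(0) = g(1) = 0`, one has
`φ'_k(g) = Σ_{i=1}^k (g(i/k) − g((i−1)/k))² = (1/k) ∫_0^1 g'(s)² ds + O(1/k²)`. -/
theorem stmt_7 (g g' : ℝ → ℝ) (hgc : ContinuousOn g (Icc 0 1))
    (hgp : PiecewiseC1LipDerivWith g g') (hg0 : g 0 = 0) (hg1 : g 1 = 0) :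
    ∃ C : ℝ, ∀ k : ℕ, 1 ≤ k →
      |(∑ i ∈ Finset.Icc 1 k,
          (g ((i : ℝ) / (k : ℝ)) - g (((i : ℝ) - 1) / (k : ℝ))) ^ 2)
        - (1 / (k : ℝ)) * ∫ s in (0 : ℝ)..1, (g' s) ^ 2| ≤ C / (k : ℝ) ^ 2 :=
  stmt_7_general g g' hgc hgp
end
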